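/- Let weights w₁,…,w_N > 0 and define the averaged occupancy measure with weights: (Σₑ wₑ)⁻¹ Σₑ wₑ ρ^{πᵉ}_{ρᵉ}. Define ρ̄_w = (Σₑ wₑ)⁻¹ Σₑ wₑ ρᵉ and the weighted mixed policy π^D_w(a|s) = (Σₑ wₑ πᵉ(a|s) ρ^{πᵉ}_{ρᵉ}(s)) / (Σₑ wₑ ρ^{πᵉ}_{ρᵉ}(s)). Then the weighted averaged occupancy measure equals the occupancy measure generated by (ρ̄_w, π^D_w, T). -/
import Mathlib


open Finset

lemma geom_summable {γ : ℝ} (hγ0 : 0 < γ) (hγ1 : γ < 1) (f : ℕ → ℝ)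
    (hf : ∀ i, 0 ≤ f i) (hb : ∀ i, f i ≤ 1) :
    Summable (fun i => γ^i * f i) := by
  apply Summable.of_nonneg_of_le (fun i => by have := hf i; positivity) (fun i => ?_)
    (summable_geometric_of_lt_one hγ0.le hγ1)
  calc γ^i * f i ≤ γ^i * 1 := mul_le_mul_of_nonneg_left (hb i) (by positivity)
    _ = γ^i := by ring

lemma occ_bellman {S A : Type*} [Fintype S] [Fintype A]
    (γ : ℝ) (hγ0 : 0 < γ) (hγ1 : γ < 1)
    (T : S → A → S → ℝ) (p : S → A → ℝ)
    (ν : ℕ → S → ℝ) (hνpos : ∀ i s, 0 ≤ ν i s) (hνle : ∀ i s, ν i s ≤ 1)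
    (hrec : ∀ i s, ν (i+1) s = ∑ s', ∑ a', T s' a' s * p s' a' * ν i s') (s : S) :
    (1-γ) * ∑' i : ℕ, γ^i * ν i s
      = (1-γ) * ν 0 s
        + γ * ∑ s', ∑ a', T s' a' s * p s' a' * ((1-γ) * ∑' i : ℕ, γ^i * ν i s') := by
  have hsum : ∀ t : S, Summable (fun i => γ^i * ν i t) :=
    fun t => geom_summable hγ0 hγ1 _ (fun i => hνpos i t) (fun i => hνle i t)
  have h1 : (∑' i : ℕ, γ^i * ν i s)
      = ν 0 s + ∑' i : ℕ, γ^(i+1) * ν (i+1) s := by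
    rw [Summable.tsum_eq_zero_add (hsum s)]; simp
  have h2 : (∑' i : ℕ, γ^(i+1) * ν (i+1) s)
      = γ * ∑ s', ∑ a', T s' a' s * p s' a' * ∑' i : ℕ, γ^i * ν i s' := by
    have hc : ∀ i : ℕ, γ^(i+1) * ν (i+1) s
        = γ * ∑ s', ∑ a', T s' a' s * p s' a' * (γ^i * ν i s') := by
      intro i
      rw [hrec i s, Finset.mul_sum, Finset.mul_sum]
      refine Finset.sum_congr rfl fun s' _ => ?_
      rw [Finset.mul_sum, Finset.mul_sum]
      exact Finset.sum_congr rfl fun a' _ => by ring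
    rw [tsum_congr hc, tsum_mul_left]
    congr 1
    rw [Summable.tsum_finsetSum (fun s' _ => summable_sum (fun a' _ => ((hsum s').mul_left _)))]
    refine Finset.sum_congr rfl fun s' _ => ?_
    rw [Summable.tsum_finsetSum (fun a' _ => ((hsum s').mul_left _))]
    refine Finset.sum_congr rfl fun a' _ => ?_
    rw [tsum_mul_left]
  rw [h1, h2]
  have h3 : ∑ s', ∑ a', T s' a' s * p s' a' * ((1-γ) * ∑' i : ℕ, γ^i * ν i s')
      = (1-γ) * ∑ s', ∑ a', T s' a' s * p s' a' * ∑' i : ℕ, γ^i * ν i s' := by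
    rw [Finset.mul_sum]
    refine Finset.sum_congr rfl fun s' _ => ?_
    rw [Finset.mul_sum]
    exact Finset.sum_congr rfl fun a' _ => by ring
  rw [h3]
  ring

lemma bellman_unique {S A : Type*} [Fintype S] [Fintype A]
    (γ : ℝ) (hγ0 : 0 < γ) (hγ1 : γ < 1)
    (T : S → A → S → ℝ) (hT : ∀ s a s', 0 ≤ T s a s') (hT1 : ∀ s a, ∑ s', T s a s' = 1)
    (p : S → A → ℝ) (hp : ∀ s a, 0 ≤ p s a) (hp1 : ∀ s, ∑ a, p s a ≤ 1)
    (h : S → ℝ)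
    (hh : ∀ s, h s = γ * ∑ s', ∑ a', T s' a' s * p s' a' * h s') :
    ∀ s, h s = 0 := by
  set M : ℝ := ∑ s, |h s| with hM
  have hMle : M ≤ γ * M := by
    calc M = ∑ s, |h s| := rfl
      _ ≤ ∑ s, γ * ∑ s', ∑ a', T s' a' s * p s' a' * |h s'| := by
          refine Finset.sum_le_sum fun s _ => ?_
          rw [hh s, abs_mul, abs_of_pos hγ0]
          refine mul_le_mul_of_nonneg_left ?_ hγ0.le
          calc |∑ s', ∑ a', T s' a' s * p s' a' * h s'|
              ≤ ∑ s', |∑ a', T s' a' s * p s' a' * h s'| := Finset.abs_sum_le_sum_abs _ _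
            _ ≤ ∑ s', ∑ a', |T s' a' s * p s' a' * h s'| :=
                Finset.sum_le_sum fun s' _ => Finset.abs_sum_le_sum_abs _ _
            _ = ∑ s', ∑ a', T s' a' s * p s' a' * |h s'| := by
                refine Finset.sum_congr rfl fun s' _ => Finset.sum_congr rfl fun a' _ => ?_
                rw [abs_mul, abs_mul, abs_of_nonneg (hT _ _ _), abs_of_nonneg (hp _ _)]
      _ = γ * ∑ s', (∑ a', p s' a') * |h s'| := by
          rw [← Finset.mul_sum]
          congr 1
          rw [Finset.sum_comm]
          refine Finset.sum_congr rfl fun s' _ => ?_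
          rw [Finset.sum_comm, Finset.sum_mul]
          refine Finset.sum_congr rfl fun a' _ => ?_
          calc ∑ s, T s' a' s * p s' a' * |h s'|
              = ∑ s, T s' a' s * (p s' a' * |h s'|) := by
                exact Finset.sum_congr rfl fun s _ => mul_assoc _ _ _
            _ = (∑ s, T s' a' s) * (p s' a' * |h s'|) := by rw [Finset.sum_mul]
            _ = p s' a' * |h s'| := by rw [hT1 s' a', one_mul]
      _ ≤ γ * M := by
          refine mul_le_mul_of_nonneg_left ?_ hγ0.le
          refine Finset.sum_le_sum fun s' _ => ?_
          calc (∑ a', p s' a') * |h s'| ≤ 1 * |h s'| :=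
              mul_le_mul_of_nonneg_right (hp1 s') (abs_nonneg _)
            _ = |h s'| := one_mul _
  have hM0 : 0 ≤ M := Finset.sum_nonneg fun s _ => abs_nonneg _
  have : M ≤ 0 := by nlinarith
  have hMz : M = 0 := le_antisymm this hM0
  intro s
  have := (Finset.sum_eq_zero_iff_of_nonneg (fun s _ => abs_nonneg (h s))).mp hMz s
    (Finset.mem_univ s)
  exact abs_eq_zero.mp this

/-- The weighted mixed policy generates the weighted averaged occupancy measure. -/
theorem weighted_averaged_occupancy {S A : Type*} [Fintype S] [Fintype A]
    (γ : ℝ) (hγ0 : 0 < γ) (hγ1 : γ < 1)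
    (T : S → A → S → ℝ) (hT : ∀ s a s', 0 ≤ T s a s') (hT1 : ∀ s a, ∑ s', T s a s' = 1)
    (N : ℕ) (hN : 0 < N) (w : Fin N → ℝ) (hw : ∀ e, 0 < w e)
    (π : Fin N → S → A → ℝ) (hπ : ∀ e s a, 0 ≤ π e s a) (hπ1 : ∀ e s, ∑ a, π e s a = 1)
    (ρ : Fin N → ℕ → S → ℝ) (hρpos : ∀ e i s, 0 ≤ ρ e i s) (hρ1 : ∀ e i, ∑ s, ρ e i s = 1)
    (hrec : ∀ e i s, ρ e (i+1) s = ∑ s', ∑ a', T s' a' s * π e s' a' * ρ e i s')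
    (occ : Fin N → S → ℝ) (hocc : ∀ e s, occ e s = (1-γ) * ∑' i : ℕ, γ^i * ρ e i s)
    (πD : S → A → ℝ)
    (hπD : ∀ s a, πD s a = (∑ e, w e * π e s a * occ e s) / (∑ e, w e * occ e s))
    (μ : ℕ → S → ℝ) (hμ0 : ∀ s, μ 0 s = (∑ e, w e)⁻¹ * ∑ e, w e * ρ e 0 s)
    (hμrec : ∀ i s, μ (i+1) s = ∑ s', ∑ a', T s' a' s * πD s' a' * μ i s') :
    ∀ s, (∑ e, w e)⁻¹ * ∑ e, w e * occ e s = (1-γ) * ∑' i : ℕ, γ^i * μ i s := by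
  haveI : Nonempty (Fin N) := Fin.pos_iff_nonempty.mp hN
  set W : ℝ := ∑ e, w e with hW
  have hWpos : 0 < W := Finset.sum_pos (fun e _ => hw e) Finset.univ_nonempty
  -- basic bounds on ρ
  have hρle : ∀ e i s, ρ e i s ≤ 1 := by
    intro e i s
    calc ρ e i s ≤ ∑ t, ρ e i t :=
        Finset.single_le_sum (fun t _ => hρpos e i t) (Finset.mem_univ s)
      _ = 1 := hρ1 e i
  -- occ is nonnegative
  have hoccpos : ∀ e s, 0 ≤ occ e s := by
    intro e s
    rw [hocc]
    have : (0:ℝ) ≤ ∑' i : ℕ, γ^i * ρ e i s :=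
      tsum_nonneg fun i => mul_nonneg (by positivity) (hρpos e i s)
    nlinarith
  -- πD is nonnegative
  have hπDpos : ∀ s a, 0 ≤ πD s a := by
    intro s a
    rw [hπD]
    exact div_nonneg
      (Finset.sum_nonneg fun e _ =>
        mul_nonneg (mul_nonneg (hw e).le (hπ e s a)) (hoccpos e s))
      (Finset.sum_nonneg fun e _ => mul_nonneg (hw e).le (hoccpos e s))
  -- row sums of πD are at most 1
  have hπD1 : ∀ s, ∑ a, πD s a ≤ 1 := by
    intro s
    have hnum : ∑ a, ∑ e, w e * π e s a * occ e s = ∑ e, w e * occ e s := by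
      rw [Finset.sum_comm]
      refine Finset.sum_congr rfl fun e _ => ?_
      calc ∑ a, w e * π e s a * occ e s = ∑ a, π e s a * (w e * occ e s) := by
            exact Finset.sum_congr rfl fun a _ => by ring
        _ = (∑ a, π e s a) * (w e * occ e s) := by rw [Finset.sum_mul]
        _ = w e * occ e s := by rw [hπ1 e s, one_mul]
    have key : ∑ a, πD s a = (∑ e, w e * occ e s) / (∑ e, w e * occ e s) := by
      calc ∑ a, πD s a
          = ∑ a, (∑ e, w e * π e s a * occ e s) / (∑ e, w e * occ e s) :=
            Finset.sum_congr rfl fun a _ => hπD s a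
        _ = (∑ a, ∑ e, w e * π e s a * occ e s) / (∑ e, w e * occ e s) :=
            (Finset.sum_div _ _ _).symm
        _ = (∑ e, w e * occ e s) / (∑ e, w e * occ e s) := by rw [hnum]
    rw [key]
    by_cases hD : (∑ e, w e * occ e s) = 0
    · rw [hD]; simp
    · rw [div_self hD]
  -- the key mixing identity
  have hmix : ∀ s a, πD s a * (∑ e, w e * occ e s) = ∑ e, w e * π e s a * occ e s := by
    intro s a
    by_cases hD : (∑ e, w e * occ e s) = 0
    · have hz : ∀ e, occ e s = 0 := by
        intro e
        have h0 : ∀ e, (e ∈ (Finset.univ : Finset (Fin N))) → w e * occ e s = 0 :=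
          (Finset.sum_eq_zero_iff_of_nonneg
            (fun e _ => mul_nonneg (hw e).le (hoccpos e s))).mp hD
        have := h0 e (Finset.mem_univ e)
        rcases mul_eq_zero.mp this with h | h
        · exact absurd h (hw e).ne'
        · exact h
      rw [hD, mul_zero]
      symm
      exact Finset.sum_eq_zero fun e _ => by rw [hz e, mul_zero]
    · rw [hπD, div_mul_cancel₀ _ hD]
  -- bounds on μ by induction
  have hμbnd : ∀ i, (∀ s, 0 ≤ μ i s) ∧ (∑ s, μ i s ≤ 1) := by
    intro i
    induction i with
    | zero =>
      constructor
      · intro s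
        rw [hμ0]
        exact mul_nonneg (inv_nonneg.mpr hWpos.le)
          (Finset.sum_nonneg fun e _ => mul_nonneg (hw e).le (hρpos e 0 s))
      · have : ∑ s, μ 0 s = 1 := by
          calc ∑ s, μ 0 s = ∑ s, W⁻¹ * ∑ e, w e * ρ e 0 s :=
              Finset.sum_congr rfl fun s _ => hμ0 s
            _ = W⁻¹ * ∑ s, ∑ e, w e * ρ e 0 s := by rw [Finset.mul_sum]
            _ = W⁻¹ * ∑ e, ∑ s, w e * ρ e 0 s := by rw [Finset.sum_comm]
            _ = W⁻¹ * ∑ e, w e := by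
                congr 1
                refine Finset.sum_congr rfl fun e _ => ?_
                rw [← Finset.mul_sum, hρ1 e 0, mul_one]
            _ = 1 := inv_mul_cancel₀ hWpos.ne'
        rw [this]
    | succ i ih =>
      constructor
      · intro s
        rw [hμrec]
        refine Finset.sum_nonneg fun s' _ => Finset.sum_nonneg fun a' _ => ?_
        exact mul_nonneg (mul_nonneg (hT _ _ _) (hπDpos _ _)) (ih.1 s')
      · calc ∑ s, μ (i+1) s = ∑ s, ∑ s', ∑ a', T s' a' s * πD s' a' * μ i s' :=
            Finset.sum_congr rfl fun s _ => hμrec i s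
          _ = ∑ s', (∑ a', πD s' a') * μ i s' := by
              rw [Finset.sum_comm]
              refine Finset.sum_congr rfl fun s' _ => ?_
              rw [Finset.sum_comm, Finset.sum_mul]
              refine Finset.sum_congr rfl fun a' _ => ?_
              calc ∑ s, T s' a' s * πD s' a' * μ i s'
                  = ∑ s, T s' a' s * (πD s' a' * μ i s') := by
                    exact Finset.sum_congr rfl fun s _ => mul_assoc _ _ _
                _ = (∑ s, T s' a' s) * (πD s' a' * μ i s') := by rw [Finset.sum_mul]
                _ = πD s' a' * μ i s' := by rw [hT1 s' a', one_mul]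
          _ ≤ ∑ s', μ i s' := by
              refine Finset.sum_le_sum fun s' _ => ?_
              calc (∑ a', πD s' a') * μ i s' ≤ 1 * μ i s' :=
                  mul_le_mul_of_nonneg_right (hπD1 s') (ih.1 s')
                _ = μ i s' := one_mul _
          _ ≤ 1 := ih.2
  have hμpos : ∀ i s, 0 ≤ μ i s := fun i s => (hμbnd i).1 s
  have hμle : ∀ i s, μ i s ≤ 1 := by
    intro i s
    calc μ i s ≤ ∑ t, μ i t :=
        Finset.single_le_sum (fun t _ => hμpos i t) (Finset.mem_univ s)
      _ ≤ 1 := (hμbnd i).2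
  -- Bellman equation for each occ e
  have hoccB : ∀ e s, occ e s
      = (1-γ) * ρ e 0 s + γ * ∑ s', ∑ a', T s' a' s * π e s' a' * occ e s' := by
    intro e s
    have h := occ_bellman γ hγ0 hγ1 T (π e) (ρ e) (hρpos e) (hρle e) (hrec e) s
    simp only [← hocc] at h
    exact h
  -- the averaged occupancy
  set ν : S → ℝ := fun s => W⁻¹ * ∑ e, w e * occ e s with hν
  -- ν satisfies the Bellman equation for πD
  have hνB : ∀ s, ν s = (1-γ) * μ 0 s + γ * ∑ s', ∑ a', T s' a' s * πD s' a' * ν s' := by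
    intro s
    have step1 : ν s = W⁻¹ * ∑ e, w e *
        ((1-γ) * ρ e 0 s + γ * ∑ s', ∑ a', T s' a' s * π e s' a' * occ e s') := by
      show W⁻¹ * (∑ e, w e * occ e s) = _
      congr 1
      exact Finset.sum_congr rfl fun e _ => by rw [hoccB e s]
    rw [step1]
    have split : ∑ e, w e *
        ((1-γ) * ρ e 0 s + γ * ∑ s', ∑ a', T s' a' s * π e s' a' * occ e s')
        = (1-γ) * (∑ e, w e * ρ e 0 s)
          + γ * ∑ e, w e * ∑ s', ∑ a', T s' a' s * π e s' a' * occ e s' := by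
      rw [Finset.mul_sum, Finset.mul_sum, ← Finset.sum_add_distrib]
      exact Finset.sum_congr rfl fun e _ => by ring
    rw [split, mul_add]
    congr 1
    · rw [hμ0 s]; ring
    · -- swap e with (s',a') and use the mixing identity
      have swap : ∑ e, w e * ∑ s', ∑ a', T s' a' s * π e s' a' * occ e s'
          = ∑ s', ∑ a', T s' a' s * πD s' a' * (∑ e, w e * occ e s') := by
        calc ∑ e, w e * ∑ s', ∑ a', T s' a' s * π e s' a' * occ e s'
            = ∑ e, ∑ s', ∑ a', T s' a' s * (w e * π e s' a' * occ e s') := by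
              refine Finset.sum_congr rfl fun e _ => ?_
              rw [Finset.mul_sum]
              refine Finset.sum_congr rfl fun s' _ => ?_
              rw [Finset.mul_sum]
              exact Finset.sum_congr rfl fun a' _ => by ring
          _ = ∑ s', ∑ e, ∑ a', T s' a' s * (w e * π e s' a' * occ e s') :=
              Finset.sum_comm
          _ = ∑ s', ∑ a', ∑ e, T s' a' s * (w e * π e s' a' * occ e s') :=
              Finset.sum_congr rfl fun s' _ => Finset.sum_comm
          _ = ∑ s', ∑ a', T s' a' s * πD s' a' * (∑ e, w e * occ e s') := by
              refine Finset.sum_congr rfl fun s' _ => Finset.sum_congr rfl fun a' _ => ?_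
              rw [← Finset.mul_sum, ← hmix s' a']
              ring
      rw [swap]
      have hpt : ∀ s' a', T s' a' s * πD s' a' * ν s'
          = W⁻¹ * (T s' a' s * πD s' a' * (∑ e, w e * occ e s')) := fun s' a' => by
        show T s' a' s * πD s' a' * (W⁻¹ * ∑ e, w e * occ e s') = _
        ring
      calc W⁻¹ * (γ * ∑ s', ∑ a', T s' a' s * πD s' a' * (∑ e, w e * occ e s'))
          = γ * (W⁻¹ * ∑ s', ∑ a', T s' a' s * πD s' a' * (∑ e, w e * occ e s')) := by
            ring
        _ = γ * ∑ s', ∑ a', W⁻¹ * (T s' a' s * πD s' a' * (∑ e, w e * occ e s')) := by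
            simp only [Finset.mul_sum]
        _ = γ * ∑ s', ∑ a', T s' a' s * πD s' a' * ν s' := by
            refine congrArg (fun x => γ * x) ?_
            exact Finset.sum_congr rfl fun s' _ => Finset.sum_congr rfl fun a' _ =>
              (hpt s' a').symm
  -- m satisfies the same Bellman equation
  set m : S → ℝ := fun s => (1-γ) * ∑' i : ℕ, γ^i * μ i s with hm
  have hmB : ∀ s, m s = (1-γ) * μ 0 s + γ * ∑ s', ∑ a', T s' a' s * πD s' a' * m s' := by
    intro s
    exact occ_bellman γ hγ0 hγ1 T πD μ hμpos hμle hμrec s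
  -- uniqueness: ν = m
  have hdiff : ∀ s, ν s - m s
      = γ * ∑ s', ∑ a', T s' a' s * πD s' a' * (ν s' - m s') := by
    intro s
    rw [hνB s, hmB s]
    have key : ∀ s', (∑ a', T s' a' s * πD s' a' * ν s')
        - (∑ a', T s' a' s * πD s' a' * m s')
        = ∑ a', T s' a' s * πD s' a' * (ν s' - m s') := by
      intro s'
      rw [← Finset.sum_sub_distrib]
      exact Finset.sum_congr rfl fun a' _ => by ring
    calc (1-γ) * μ 0 s + γ * ∑ s', ∑ a', T s' a' s * πD s' a' * ν s'
        - ((1-γ) * μ 0 s + γ * ∑ s', ∑ a', T s' a' s * πD s' a' * m s')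
        = γ * ((∑ s', ∑ a', T s' a' s * πD s' a' * ν s')
            - (∑ s', ∑ a', T s' a' s * πD s' a' * m s')) := by ring
      _ = γ * ∑ s', ((∑ a', T s' a' s * πD s' a' * ν s')
            - (∑ a', T s' a' s * πD s' a' * m s')) := by rw [Finset.sum_sub_distrib]
      _ = γ * ∑ s', ∑ a', T s' a' s * πD s' a' * (ν s' - m s') := by
          exact congrArg (fun x => γ * x) (Finset.sum_congr rfl fun s' _ => key s')
  have hzero := bellman_unique γ hγ0 hγ1 T hT hT1 πD hπDpos hπD1
    (fun s => ν s - m s) hdiff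
  intro s
  have h2 : ν s - m s = 0 := hzero s
  have h3 : ν s = m s := by linarith
  exact h3
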